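/- Let μ₀ = (−59+√17481)/14 and let G(μ,ε) = a₁(μ,ε)a₂(μ,ε) − a₃(μ,ε), where X³ + a₁X² + a₂X + a₃ is the characteristic polynomial of J₁(μ,ε) = [[−2, 0, 3], [−10/3 + εd₁, −μ + εd₂, 0], [10/3, 50 − μ + εd₂, −5 − εx₀]], with d₁ = 10μ(μ−50)/(25+3εμ²), d₂ = 3μ²(μ−50)/(25+3εμ²), x₀ = 15μ(50−μ)/(25+3εμ²). Then there exist ε̄ > 0 and a continuously differentiable function μ : (−ε̄, ε̄) → ℝ with μ(0) = μ₀ such that G(μ(ε), ε) = 0 for all |ε| < ε̄; moreover, for all sufficiently small |ε|, a₂(μ(ε),ε) > 0, and hence the matrix J₁(μ(ε),ε) has a pair of purely imaginary complex-conjugate eigenvalues ±iω(ε) with ω(ε) = √(a₂(μ(ε),ε)) and ω(0) = √(7μ₀). -/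

import Mathlib

open Polynomial Matrix

/-- The reduced Jacobian `J₁(μ,ε)`. -/
noncomputable def J1 (μ ε : ℝ) : Matrix (Fin 3) (Fin 3) ℝ :=
  !![-2, 0, 3;
     -10/3 + ε * (10 * μ * (μ - 50) / (25 + 3 * ε * μ ^ 2)),
       -μ + ε * (3 * μ ^ 2 * (μ - 50) / (25 + 3 * ε * μ ^ 2)), 0;
     10/3, 50 - μ + ε * (3 * μ ^ 2 * (μ - 50) / (25 + 3 * ε * μ ^ 2)),
       -5 - ε * (15 * μ * (50 - μ) / (25 + 3 * ε * μ ^ 2))]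

/-- The coefficient `a₂(μ,ε)` of the characteristic polynomial
`X³ + a₁X² + a₂X + a₃` of `J₁(μ,ε)`. -/
noncomputable def a2 (μ ε : ℝ) : ℝ := (J1 μ ε).charpoly.coeff 1

/-- The Routh–Hurwitz quantity `G(μ,ε) = a₁a₂ − a₃`. -/
noncomputable def Gfun (μ ε : ℝ) : ℝ :=
  (J1 μ ε).charpoly.coeff 2 * (J1 μ ε).charpoly.coeff 1 - (J1 μ ε).charpoly.coeff 0

/-!
On the slice `ε = 0` one computes `a₂(μ,0) = 7μ` and `G(μ,0) = 7μ² + 59μ − 500`, whose positive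
root is `μ₀`, with `∂G/∂μ(μ₀,0) = 14μ₀ + 59 ≠ 0`. The implicit function theorem continues `μ₀` to
a `C¹` curve `μ(ε)` with `G(μ(ε),ε) = 0`, and `a₂(μ(ε),ε)` stays positive near `ε = 0` by
continuity. Finally, when `a₁a₂ = a₃` the characteristic polynomial factors as
`(X + a₁)(X² + a₂)`, so `±i√a₂` are eigenvalues.
-/

open Filter Topology

namespace Matrix

variable {R : Type*} [CommRing R]

theorem charpoly_fin_three (M : Matrix (Fin 3) (Fin 3) R) :
    M.charpoly = X ^ 3 - C M.trace * X ^ 2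
      + C (M 0 0 * M 1 1 - M 0 1 * M 1 0 + M 0 0 * M 2 2 - M 0 2 * M 2 0
        + M 1 1 * M 2 2 - M 1 2 * M 2 1) * X - C M.det := by
  rw [charpoly, det_fin_three, trace_fin_three, det_fin_three]
  simp only [charmatrix_apply, diagonal_apply, Fin.isValue, Fin.reduceEq, if_true, if_false]
  simp only [map_add, map_sub, _root_.map_mul]
  ring

theorem charpoly_coeff_two_fin_three (M : Matrix (Fin 3) (Fin 3) R) :
    M.charpoly.coeff 2 = -M.trace := by
  rw [charpoly_fin_three]; simp

theorem charpoly_coeff_one_fin_three (M : Matrix (Fin 3) (Fin 3) R) :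
    M.charpoly.coeff 1 = M 0 0 * M 1 1 - M 0 1 * M 1 0 + M 0 0 * M 2 2 - M 0 2 * M 2 0
        + M 1 1 * M 2 2 - M 1 2 * M 2 1 := by
  rw [charpoly_fin_three]; simp

theorem charpoly_coeff_zero_fin_three (M : Matrix (Fin 3) (Fin 3) R) :
    M.charpoly.coeff 0 = -M.det := by
  rw [charpoly_fin_three]; simp

theorem mem_spectrum_map_ofReal_of_coeff_mul_coeff {A : Matrix (Fin 3) (Fin 3) ℝ}
    (hA : A.charpoly.coeff 2 * A.charpoly.coeff 1 = A.charpoly.coeff 0)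
    {z : ℂ} (hz : z ^ 2 = -A.charpoly.coeff 1) :
    z ∈ spectrum ℂ (A.map Complex.ofReal) := by
  have hdeg : A.charpoly.natDegree < 4 := by simp
  have hlead : A.charpoly.coeff 3 = 1 := by
    simpa using A.charpoly_monic.coeff_natDegree
  rw [mem_spectrum_iff_isRoot_charpoly,
    show A.map Complex.ofReal = A.map Complex.ofRealHom from rfl, charpoly_map, IsRoot,
    eval_map, eval₂_eq_sum_range' _ hdeg]
  simp only [Finset.sum_range_succ, Finset.sum_range_zero, hlead, Complex.ofRealHom_eq_coe,
    Complex.ofReal_one]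
  have hA' : (A.charpoly.coeff 2 : ℂ) * A.charpoly.coeff 1 = A.charpoly.coeff 0 := by
    exact_mod_cast hA
  linear_combination (z + A.charpoly.coeff 2) * hz - hA'

end Matrix

theorem ContDiffAt.exists_implicitFunction_of_hasDerivAt {𝕜 E : Type*} [RCLike 𝕜]
    [NormedAddCommGroup E] [NormedSpace 𝕜 E] [CompleteSpace E] {f : E × 𝕜 → 𝕜} {u : E × 𝕜}
    {n : WithTop ℕ∞} (hf : ContDiffAt 𝕜 n f u) (hn : n ≠ 0) {c : 𝕜}
    (hc : HasDerivAt (fun y => f (u.1, y)) c u.2) (hc0 : c ≠ 0) :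
    ∃ ψ : E → 𝕜, ψ u.1 = u.2 ∧ ContDiffAt 𝕜 n ψ u.1 ∧ ∀ᶠ x in 𝓝 u.1, f (x, ψ x) = f u := by
  have hslice : HasDerivAt (fun y => f (u.1, y)) ((fderiv 𝕜 f u ∘L .inr 𝕜 E 𝕜) 1) u.2 :=
    (hf.differentiableAt hn).hasFDerivAt.comp_hasDerivAt u.2
      ((hasDerivAt_const u.2 u.1).prodMk (hasDerivAt_id u.2))
  have hinv : (fderiv 𝕜 f u ∘L .inr 𝕜 E 𝕜).IsInvertible :=
    ⟨ContinuousLinearEquiv.unitsEquivAut 𝕜 (Units.mk0 c hc0),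
      ContinuousLinearMap.ext_ring (by simp [hc.unique hslice])⟩
  exact ⟨hf.implicitFunction hn hinv, hf.implicitFunction_apply_self hn hinv,
    hf.contDiffAt_implicitFunction hn hinv, hf.eventually_apply_implicitFunction hn hinv⟩

theorem Real.exists_Ioo_neg_self_of_eventually {p : ℝ → Prop} (h : ∀ᶠ x in 𝓝 0, p x) :
    ∃ r > 0, ∀ x ∈ Set.Ioo (-r) r, p x := by
  obtain ⟨r, hr, hp⟩ := Metric.eventually_nhds_iff_ball.1 h
  exact ⟨r, hr, fun x hx => hp x (by simpa [Real.ball_eq_Ioo] using hx)⟩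

theorem Gfun_zero_right (μ : ℝ) : Gfun μ 0 = 7 * μ ^ 2 + 59 * μ - 500 := by
  simp only [Gfun, charpoly_coeff_two_fin_three, charpoly_coeff_one_fin_three,
    charpoly_coeff_zero_fin_three, trace_fin_three, det_fin_three, J1, of_apply, cons_val',
    cons_val_zero, cons_val_one, cons_val, cons_val_fin_one]
  ring

theorem a2_zero_right (μ : ℝ) : a2 μ 0 = 7 * μ := by
  simp only [a2, charpoly_coeff_one_fin_three, J1, of_apply, cons_val', cons_val_zero,
    cons_val_one, cons_val, cons_val_fin_one]
  ring

theorem hasDerivAt_Gfun_zero_right (μ : ℝ) :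
    HasDerivAt (fun μ => Gfun μ 0) (14 * μ + 59) μ := by
  simp only [Gfun_zero_right]
  exact ((((hasDerivAt_pow 2 μ).const_mul 7).add ((hasDerivAt_id μ).const_mul 59)).sub_const
    500).congr_deriv (by norm_num; ring)

theorem Gfun_mu0_zero : Gfun ((-59 + Real.sqrt 17481) / 14) 0 = 0 := by
  have hs : Real.sqrt 17481 ^ 2 = 17481 := Real.sq_sqrt (by norm_num)
  rw [Gfun_zero_right]
  linear_combination hs / 28

theorem contDiffAt_Gfun_swap {n : WithTop ℕ∞} {p : ℝ × ℝ} (hp : 25 + 3 * p.1 * p.2 ^ 2 ≠ 0) :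
    ContDiffAt ℝ n (fun q : ℝ × ℝ => Gfun q.2 q.1) p := by
  simp only [Gfun, charpoly_coeff_two_fin_three, charpoly_coeff_one_fin_three,
    charpoly_coeff_zero_fin_three, trace_fin_three, det_fin_three, J1, of_apply, cons_val',
    cons_val_zero, cons_val_one, cons_val, cons_val_fin_one]
  fun_prop (disch := simpa [mul_comm] using hp)

theorem continuousAt_a2_swap {p : ℝ × ℝ} (hp : 25 + 3 * p.1 * p.2 ^ 2 ≠ 0) :
    ContinuousAt (fun q : ℝ × ℝ => a2 q.2 q.1) p := by
  simp only [a2, charpoly_coeff_one_fin_three, J1, of_apply, cons_val', cons_val_zero,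
    cons_val_one, cons_val, cons_val_fin_one]
  fun_prop (disch := simpa [mul_comm] using hp)

theorem eventually_a2_pos {ψ : ℝ → ℝ} {μ₀ : ℝ} (hμ₀ : 0 < μ₀) (hψ : ContinuousAt ψ 0)
    (hψ0 : ψ 0 = μ₀) : ∀ᶠ ε in 𝓝 0, 0 < a2 (ψ ε) ε := by
  have hcurve : Tendsto (fun ε => (ε, ψ ε)) (𝓝 0) (𝓝 (0, μ₀)) :=
    tendsto_id.prodMk_nhds (hψ0 ▸ hψ.tendsto)
  have ha2 : Tendsto (fun ε => a2 (ψ ε) ε) (𝓝 0) (𝓝 (7 * μ₀)) := by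
    have := (continuousAt_a2_swap (p := (0, μ₀)) (by norm_num)).tendsto.comp hcurve
    simpa only [Function.comp_def, a2_zero_right] using this
  exact ha2.eventually (lt_mem_nhds (by positivity))

/-- There is a `C¹` curve `μ(ε)` through `μ₀` along which `G(μ(ε),ε) = 0`;
moreover for small `|ε|`, `a₂(μ(ε),ε) > 0` and `J₁(μ(ε),ε)` has the pair of
purely imaginary conjugate eigenvalues `±i√(a₂(μ(ε),ε))`, with
`ω(0) = √(7μ₀)`. -/
theorem stmt_8 :
    ∃ εb > (0 : ℝ), ∃ μf : ℝ → ℝ,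
      ContDiffOn ℝ 1 μf (Set.Ioo (-εb) εb) ∧
      μf 0 = (-59 + Real.sqrt 17481) / 14 ∧
      (∀ ε ∈ Set.Ioo (-εb) εb, Gfun (μf ε) ε = 0) ∧
      Real.sqrt (a2 (μf 0) 0) = Real.sqrt (7 * ((-59 + Real.sqrt 17481) / 14)) ∧
      ∃ εc > (0 : ℝ), εc ≤ εb ∧ ∀ ε ∈ Set.Ioo (-εc) εc,
        0 < a2 (μf ε) ε ∧
        (Complex.I * (Real.sqrt (a2 (μf ε) ε) : ℂ)) ∈
          spectrum ℂ ((J1 (μf ε) ε).map Complex.ofReal) ∧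
        (-(Complex.I * (Real.sqrt (a2 (μf ε) ε) : ℂ))) ∈
          spectrum ℂ ((J1 (μf ε) ε).map Complex.ofReal) := by
  have hμ₀ : 0 < (-59 + Real.sqrt 17481) / 14 := by
    have : (59 : ℝ) < Real.sqrt 17481 := by
      rw [Real.lt_sqrt (by norm_num)]; norm_num
    linarith
  obtain ⟨μf, hμf0, hμfC, hμfG⟩ := (contDiffAt_Gfun_swap (n := 1)
    (p := (0, (-59 + Real.sqrt 17481) / 14)) (by norm_num)).exists_implicitFunction_of_hasDerivAt
    one_ne_zero (hasDerivAt_Gfun_zero_right _) (by positivity)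
  dsimp only at hμf0 hμfC hμfG
  rw [Gfun_mu0_zero] at hμfG
  obtain ⟨εb, hεb, hεb_good⟩ := Real.exists_Ioo_neg_self_of_eventually
    ((hμfC.eventually (by simp)).and
      (hμfG.and (eventually_a2_pos hμ₀ hμfC.continuousAt hμf0)))
  refine ⟨εb, hεb, μf, fun ε hε => (hεb_good ε hε).1.contDiffWithinAt, hμf0,
    fun ε hε => (hεb_good ε hε).2.1, by rw [hμf0, a2_zero_right], εb, hεb, le_rfl, ?_⟩
  intro ε hε
  obtain ⟨-, hG, hpos⟩ := hεb_good ε hε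
  have hsq : (Complex.I * (Real.sqrt (a2 (μf ε) ε) : ℂ)) ^ 2 = -(a2 (μf ε) ε : ℂ) := by
    rw [mul_pow, Complex.I_sq, ← Complex.ofReal_pow, Real.sq_sqrt hpos.le]; ring
  have hG' := sub_eq_zero.1 hG
  exact ⟨hpos, Matrix.mem_spectrum_map_ofReal_of_coeff_mul_coeff hG' hsq,
    Matrix.mem_spectrum_map_ofReal_of_coeff_mul_coeff hG' (by rw [neg_sq]; exact hsq)⟩
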